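/- Let V be a real normed space satisfying the Aronszajn criterion. If p and q are nonzero vectors with ‖p + q‖ = ‖p - q‖, then for all real numbers a and b, ‖a • p + b • q‖ = ‖a • p - b • q‖. -/

import Mathlib

/-!
Call `x` isosceles orthogonal to `y` when `‖x + y‖ = ‖x - y‖`. Applying the Aronszajn criterion to
the pairs `(x + (k + 1) • y, y)` and `(x - (k + 1) • y, -y)` passes this relation from `k • y` and
`(k + 1) • y` on to `(k + 2) • y`, so it is preserved by integer multiples of `y`. Together with its
symmetry and its invariance under a common rescaling this gives rational multiples, and continuity
of the norm gives all real multiples.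
-/

def AronszajnCriterion (V : Type*) [NormedAddCommGroup V] : Prop :=
  ∀ v₁ w₁ v₂ w₂ : V, ‖v₁‖ = ‖v₂‖ → ‖w₁‖ = ‖w₂‖ → ‖v₁ - w₁‖ = ‖v₂ - w₂‖ → ‖v₁ + w₁‖ = ‖v₂ + w₂‖

def IsoOrthogonal {V : Type*} [NormedAddCommGroup V] (x y : V) : Prop :=
  ‖x + y‖ = ‖x - y‖

namespace IsoOrthogonal

variable {V : Type*} [NormedAddCommGroup V] {x y : V}

theorem symm (h : IsoOrthogonal x y) : IsoOrthogonal y x := by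
  rw [IsoOrthogonal, add_comm, norm_sub_rev]
  exact h

theorem neg_right (h : IsoOrthogonal x y) : IsoOrthogonal x (-y) := by
  rw [IsoOrthogonal, ← sub_eq_add_neg, sub_neg_eq_add]
  exact Eq.symm h

variable [NormedSpace ℝ V]

theorem smul (c : ℝ) (h : IsoOrthogonal x y) : IsoOrthogonal (c • x) (c • y) := by
  rw [IsoOrthogonal, ← smul_add, ← smul_sub, norm_smul, norm_smul, h]

theorem natCast_smul_right (hA : AronszajnCriterion V) (h : IsoOrthogonal x y) (n : ℕ) :
    IsoOrthogonal x ((n : ℝ) • y) := by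
  suffices ∀ k : ℕ, IsoOrthogonal x ((k : ℝ) • y) ∧ IsoOrthogonal x (((k : ℝ) + 1) • y) from
    (this n).1
  intro k
  induction k with
  | zero => exact ⟨by simp [IsoOrthogonal], by simpa using h⟩
  | succ k ih =>
    refine ⟨by simpa using ih.2, ?_⟩
    unfold IsoOrthogonal at ih
    have step := hA (x + ((k : ℝ) + 1) • y) y (x - ((k : ℝ) + 1) • y) (-y) ih.2 (norm_neg y).symm
      (by convert ih.1 using 2 <;> module)
    unfold IsoOrthogonal
    convert step using 2 <;> push_cast <;> module

theorem intCast_smul_right (hA : AronszajnCriterion V) (h : IsoOrthogonal x y) (m : ℤ) :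
    IsoOrthogonal x ((m : ℝ) • y) := by
  rcases Int.natAbs_eq m with hm | hm <;> rw [hm]
  · exact_mod_cast h.natCast_smul_right hA m.natAbs
  · simpa using (h.natCast_smul_right hA m.natAbs).neg_right

theorem ratCast_smul_right (hA : AronszajnCriterion V) (h : IsoOrthogonal x y) (r : ℚ) :
    IsoOrthogonal x ((r : ℝ) • y) := by
  have hden : (r.den : ℝ) ≠ 0 := Nat.cast_ne_zero.mpr r.den_nz
  have scaled := (((h.symm.natCast_smul_right hA r.den).symm.intCast_smul_right hA r.num).smul
    (r.den : ℝ)⁻¹)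
  rwa [smul_smul, inv_mul_cancel₀ hden, one_smul, smul_smul, ← div_eq_inv_mul,
    ← Rat.cast_def] at scaled

theorem smul_right (hA : AronszajnCriterion V) (h : IsoOrthogonal x y) (t : ℝ) :
    IsoOrthogonal x (t • y) := by
  have hadd : Continuous fun s : ℝ => ‖x + s • y‖ := by fun_prop
  have hsub : Continuous fun s : ℝ => ‖x - s • y‖ := by fun_prop
  refine congrFun (Continuous.ext_on Rat.denseRange_cast hadd hsub ?_) t
  rintro _ ⟨r, rfl⟩
  exact h.ratCast_smul_right hA r

theorem smul_left_right (hA : AronszajnCriterion V) (h : IsoOrthogonal x y) (a b : ℝ) :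
    IsoOrthogonal (a • x) (b • y) :=
  ((h.smul_right hA b).symm.smul_right hA a).symm

end IsoOrthogonal

theorem stmt_4_general (V : Type*) [NormedAddCommGroup V] [NormedSpace ℝ V]
    (hA : ∀ v₁ w₁ v₂ w₂ : V, ‖v₁‖ = ‖v₂‖ → ‖w₁‖ = ‖w₂‖ → ‖v₁ - w₁‖ = ‖v₂ - w₂‖ → ‖v₁ + w₁‖ = ‖v₂ + w₂‖)
    (p q : V) (hpq : ‖p + q‖ = ‖p - q‖) :
    ∀ a b : ℝ, ‖a • p + b • q‖ = ‖a • p - b • q‖ :=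
  IsoOrthogonal.smul_left_right hA hpq

theorem stmt_4 (V : Type*) [NormedAddCommGroup V] [NormedSpace ℝ V]
    (hA : ∀ v₁ w₁ v₂ w₂ : V, ‖v₁‖ = ‖v₂‖ → ‖w₁‖ = ‖w₂‖ → ‖v₁ - w₁‖ = ‖v₂ - w₂‖ → ‖v₁ + w₁‖ = ‖v₂ + w₂‖)
    (p q : V) (hp : p ≠ 0) (hq : q ≠ 0) (hpq : ‖p + q‖ = ‖p - q‖) :
    ∀ a b : ℝ, ‖a • p + b • q‖ = ‖a • p - b • q‖ :=
  stmt_4_general V hA p q hpq
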